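/- arXiv:1404.2035 — 2 statements merged into one kernel-verified Lean document; each statement's English description precedes it below -/
import Mathlib

section
/- Let (X, τ, ‖·‖) satisfy: τ is coarser than the norm topology and both topologies have the same bounded sets. Let {T(t)}_{t≥0} be a locally equicontinuous semigroup of τ-continuous linear operators, and suppose M ≥ 1 satisfies: for every p ∈ 𝒩 there exists q ∈ 𝒩 with p(T(t)x) ≤ M q(x) for all t ∈ [0,1] and x ∈ X, where moreover q can be taken with q ≥ p. Then with ω = log M, for every T ≥ 0 and every p ∈ 𝒩 there exists q ∈ 𝒩 such that sup_{t ≤ T} e^{-ωt} p(T(t)x) ≤ M q(x) for all x ∈ X. -/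
open Real

/-- Exponential boundedness: from a bound `p(T(t)x) ≤ M q(x)` on `[0,1]` one obtains,
with `ω = log M`, a bound `e^{-ωt} p(T(t)x) ≤ M q(x)` on every `[0, T₀]`. -/
theorem semigroup_exponentially_bounded {X : Type*} [NormedAddCommGroup X] [NormedSpace ℝ X]
    (τ : TopologicalSpace X)
    (hτ : (@UniformSpace.toTopologicalSpace X inferInstance) ≤ τ)
    (hbdd : ∀ s : Set X,
      @Bornology.IsVonNBounded ℝ X _ _ _ τ s ↔
        @Bornology.IsVonNBounded ℝ X _ _ _ (@UniformSpace.toTopologicalSpace X inferInstance) s)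
    (T : ℝ → X →ₗ[ℝ] X)
    (hTcont : ∀ t : ℝ, 0 ≤ t → @Continuous X X τ τ fun x => T t x)
    (hT0 : T 0 = LinearMap.id)
    (hTsem : ∀ s t : ℝ, 0 ≤ s → 0 ≤ t → T (s + t) = (T s).comp (T t))
    (hlocequi : ∀ t : ℝ, 0 ≤ t → ∀ p : Seminorm ℝ X, @Continuous X ℝ τ _ p →
      ∃ q : Seminorm ℝ X, @Continuous X ℝ τ _ q ∧
        ∀ s ∈ Set.Icc 0 t, ∀ x, p (T s x) ≤ q x)
    (M : ℝ) (hM : 1 ≤ M)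
    (hstep : ∀ p : Seminorm ℝ X, @Continuous X ℝ τ _ p → (∀ x, p x ≤ ‖x‖) →
      ∃ q : Seminorm ℝ X, @Continuous X ℝ τ _ q ∧ (∀ x, q x ≤ ‖x‖) ∧
        (∀ x, p x ≤ q x) ∧ ∀ t ∈ Set.Icc (0 : ℝ) 1, ∀ x, p (T t x) ≤ M * q x) :
    ∀ T₀ : ℝ, 0 ≤ T₀ → ∀ p : Seminorm ℝ X, @Continuous X ℝ τ _ p → (∀ x, p x ≤ ‖x‖) →
      ∃ q : Seminorm ℝ X, @Continuous X ℝ τ _ q ∧ (∀ x, q x ≤ ‖x‖) ∧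
        ∀ t ∈ Set.Icc 0 T₀, ∀ x, exp (-(Real.log M) * t) * p (T t x) ≤ M * q x := by
  intro T₀ hT₀ p hpc hpn
  have hMpos : (0:ℝ) < M := lt_of_lt_of_le one_pos hM
  have hω : 0 ≤ Real.log M := Real.log_nonneg hM
  have key : ∀ n : ℕ, ∃ q : Seminorm ℝ X, @Continuous X ℝ τ _ q ∧ (∀ x, q x ≤ ‖x‖) ∧
      (∀ x, p x ≤ q x) ∧
      ∀ t ∈ Set.Icc (0:ℝ) (n+1), ∀ x, p (T t x) ≤ M * Real.exp (Real.log M * t) * q x := by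
    intro n
    induction n with
    | zero =>
      obtain ⟨q, hqc, hqn, hpq, hb⟩ := hstep p hpc hpn
      refine ⟨q, hqc, hqn, hpq, ?_⟩
      intro t ht x
      simp only [Nat.cast_zero, zero_add] at ht
      have h1 : (1:ℝ) ≤ Real.exp (Real.log M * t) :=
        Real.one_le_exp (mul_nonneg hω ht.1)
      have h2 := hb t ht x
      have h3 := mul_le_mul_of_nonneg_left h1 (mul_nonneg hMpos.le (apply_nonneg q x))
      nlinarith
    | succ n ih =>
      obtain ⟨q, hqc, hqn, hpq, hb⟩ := ih
      obtain ⟨q', hq'c, hq'n, hqq', hb'⟩ := hstep q hqc hqn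
      refine ⟨q', hq'c, hq'n, fun x => (hpq x).trans (hqq' x), ?_⟩
      intro t ht x
      have hn1 : ((n:ℝ)+1) ≤ (((n+1 : ℕ) : ℝ)+1) := by push_cast; linarith
      rcases le_or_gt t (n+1) with h | h
      · have hbt := hb t ⟨ht.1, h⟩ x
        have hq := hqq' x
        have hMe : 0 ≤ M * Real.exp (Real.log M * t) :=
          mul_nonneg hMpos.le (Real.exp_pos _).le
        calc p (T t x) ≤ M * Real.exp (Real.log M * t) * q x := hbt
          _ ≤ M * Real.exp (Real.log M * t) * q' x := by
              exact mul_le_mul_of_nonneg_left hq hMe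
      · have ht2 : t ≤ ((n:ℝ)+1)+1 := by
          have := ht.2; push_cast at this; linarith
        have hn0 : (0:ℝ) ≤ (n:ℝ) := n.cast_nonneg
        have h1t : (1:ℝ) ≤ t := by linarith
        have ht1 : t - 1 ∈ Set.Icc (0:ℝ) (n+1) := ⟨by linarith, by linarith⟩
        have hdecomp : T t = (T (t-1)).comp (T 1) := by
          have h := hTsem (t-1) 1 (by linarith) zero_le_one
          have : t - 1 + 1 = t := by ring
          rwa [this] at h
        have e1 : p (T t x) = p (T (t-1) (T 1 x)) := by rw [hdecomp]; rfl
        have e2 := hb (t-1) ht1 (T 1 x)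
        have e3 := hb' 1 ⟨zero_le_one, le_refl 1⟩ x
        have hexp : Real.exp (Real.log M * (t-1)) * M = Real.exp (Real.log M * t) := by
          rw [mul_sub, mul_one, Real.exp_sub, Real.exp_log hMpos]
          field_simp
        have hMe : 0 ≤ M * Real.exp (Real.log M * (t-1)) :=
          mul_nonneg hMpos.le (Real.exp_pos _).le
        calc p (T t x) = p (T (t-1) (T 1 x)) := e1
          _ ≤ M * Real.exp (Real.log M * (t-1)) * q (T 1 x) := e2
          _ ≤ M * Real.exp (Real.log M * (t-1)) * (M * q' x) :=
              mul_le_mul_of_nonneg_left e3 hMe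
          _ = M * (Real.exp (Real.log M * (t-1)) * M) * q' x := by ring
          _ = M * Real.exp (Real.log M * t) * q' x := by rw [hexp]
  obtain ⟨q, hqc, hqn, _, hb⟩ := key ⌈T₀⌉₊
  refine ⟨q, hqc, hqn, ?_⟩
  intro t ht x
  have ht' : t ∈ Set.Icc (0:ℝ) ((⌈T₀⌉₊ : ℝ)+1) :=
    ⟨ht.1, le_trans (ht.2.trans (Nat.le_ceil T₀)) (by linarith)⟩
  have hbt := hb t ht' x
  have hep : (0:ℝ) < Real.exp (-(Real.log M) * t) := Real.exp_pos _
  have hexp : Real.exp (-(Real.log M) * t) * Real.exp (Real.log M * t) = 1 := by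
    rw [← Real.exp_add]; ring_nf; exact Real.exp_zero
  have h2 := mul_le_mul_of_nonneg_left hbt hep.le
  calc Real.exp (-(Real.log M) * t) * p (T t x)
      ≤ Real.exp (-(Real.log M) * t) * (M * Real.exp (Real.log M * t) * q x) := h2
    _ = M * q x * (Real.exp (-(Real.log M) * t) * Real.exp (Real.log M * t)) := by ring
    _ = M * q x := by rw [hexp, mul_one]
end

section
/- Let G be a continuous linear operator on a locally convex space (X, τ) equipped with a norm ‖·‖ whose topology is finer than τ with the same bounded sets. Suppose there is c > 0 and seminorms q₀ ≤ q₁ ≤ q₂ ≤ ⋯ in 𝒩 with qₙ(Gx) ≤ c·qₙ₊₁(x) for all n and x, and q₀ = p for a given p ∈ 𝒩. If 𝒩 is closed under countable convex combinations, then for all t ≥ 0 and all n, p(∑_{k=0}^{n} t^k G^k x / k!) ≤ e^{tc} q_t(x), where q_t := ∑_{k≥0} ((ct)^k/k!) e^{-tc} q_k is a τ-continuous seminorm in 𝒩. -/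
open Real

lemma seminorm_sum_le' {X : Type*} [NormedAddCommGroup X] [NormedSpace ℝ X]
    (p : Seminorm ℝ X) {ι : Type*} (s : Finset ι) (f : ι → X) :
    p (∑ i ∈ s, f i) ≤ ∑ i ∈ s, p (f i) := by
  classical
  induction s using Finset.induction_on with
  | empty => simp
  | insert _ _ h ih =>
    rw [Finset.sum_insert h, Finset.sum_insert h]
    exact (map_add_le_add p _ _).trans (by gcongr)

/-- Bound on the partial sums of the exponential series of a continuous operator `G`
in terms of the seminorm `q_t = ∑ₖ ((ct)^k/k!) e^{-tc} q_k` from `𝒩`. -/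
theorem exponential_series_seminorm_bound {X : Type*} [NormedAddCommGroup X]
    [NormedSpace ℝ X] (τ : TopologicalSpace X)
    (hτ : (@UniformSpace.toTopologicalSpace X inferInstance) ≤ τ)
    (hbdd : ∀ s : Set X,
      @Bornology.IsVonNBounded ℝ X _ _ _ τ s ↔
        @Bornology.IsVonNBounded ℝ X _ _ _ (@UniformSpace.toTopologicalSpace X inferInstance) s)
    (G : X →ₗ[ℝ] X) (hG : @Continuous X X τ τ fun x => G x)
    (c : ℝ) (hc : 0 < c)
    (p : Seminorm ℝ X) (q : ℕ → Seminorm ℝ X) (hq0 : q 0 = p)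
    (hqN : ∀ n, @Continuous X ℝ τ _ (q n) ∧ ∀ x, q n x ≤ ‖x‖)
    (hqmono : ∀ (n : ℕ) (x : X), q n x ≤ q (n + 1) x)
    (hqG : ∀ (n : ℕ) (x : X), q n (G x) ≤ c * q (n + 1) x)
    (hNconvex : ∀ (p' : ℕ → Seminorm ℝ X) (α : ℕ → ℝ),
      (∀ n, @Continuous X ℝ τ _ (p' n) ∧ ∀ x, p' n x ≤ ‖x‖) → (∀ n, 0 ≤ α n) →
      (∑' n, α n) = 1 →
      ∃ q' : Seminorm ℝ X, @Continuous X ℝ τ _ q' ∧ (∀ x, q' x ≤ ‖x‖) ∧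
        ∀ x, q' x = ∑' n, α n * p' n x) :
    ∀ t : ℝ, 0 ≤ t →
      ∃ qt : Seminorm ℝ X, @Continuous X ℝ τ _ qt ∧ (∀ x, qt x ≤ ‖x‖) ∧
        (∀ x, qt x = ∑' k : ℕ, (c * t) ^ k / k.factorial * exp (-(t * c)) * q k x) ∧
        ∀ (n : ℕ) (x : X),
          p (∑ k ∈ Finset.range (n + 1), (t ^ k / k.factorial : ℝ) • (G ^ k) x) ≤
            exp (t * c) * qt x := by
  intro t ht
  set α : ℕ → ℝ := fun k => (c * t) ^ k / k.factorial * exp (-(t * c)) with hα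
  have hct : 0 ≤ c * t := mul_nonneg hc.le ht
  have hαnn : ∀ k, 0 ≤ α k := fun k =>
    mul_nonneg (div_nonneg (pow_nonneg hct k) (Nat.cast_nonneg _)) (exp_pos _).le
  have hexp : ∑' k : ℕ, (c * t) ^ k / (k.factorial : ℝ) = exp (c * t) := by
    rw [Real.exp_eq_exp_ℝ, NormedSpace.exp_eq_tsum_div]
  have hαsummable : Summable α :=
    (Real.summable_pow_div_factorial (c * t)).mul_right _
  have hαsum : (∑' k, α k) = 1 := by
    rw [hα, tsum_mul_right, hexp, mul_comm t c, ← Real.exp_add]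
    simp
  obtain ⟨qt, hqtc, hqtle, hqteq⟩ := hNconvex q α hqN hαnn hαsum
  refine ⟨qt, hqtc, hqtle, hqteq, ?_⟩
  -- key estimate : q n (G^k x) ≤ c^k * q (n+k) x
  have key : ∀ (k n : ℕ) (x : X), q n ((G ^ k) x) ≤ c ^ k * q (n + k) x := by
    intro k
    induction k with
    | zero => intro n x; simp
    | succ k ih =>
      intro n x
      have h1 : (G ^ (k + 1)) x = (G ^ k) (G x) := by
        rw [pow_succ]; rfl
      rw [h1]
      calc q n ((G ^ k) (G x)) ≤ c ^ k * q (n + k) (G x) := ih n (G x)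
        _ ≤ c ^ k * (c * q (n + k + 1) x) := by
            exact mul_le_mul_of_nonneg_left (hqG (n + k) x) (pow_nonneg hc.le k)
        _ = c ^ (k + 1) * q (n + (k + 1)) x := by ring_nf
  have hGk : ∀ (k : ℕ) (x : X), p ((G ^ k) x) ≤ c ^ k * q k x := by
    intro k x
    have := key k 0 x
    rwa [hq0, zero_add] at this
  intro n x
  have hsum_le : ∀ x : X, Summable (fun k => α k * q k x) := by
    intro x
    refine Summable.of_nonneg_of_le
      (fun k => mul_nonneg (hαnn k) (apply_nonneg _ _))
      (fun k => ?_) (hαsummable.mul_right ‖x‖)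
    exact mul_le_mul_of_nonneg_left ((hqN k).2 x) (hαnn k)
  calc p (∑ k ∈ Finset.range (n + 1), (t ^ k / k.factorial : ℝ) • (G ^ k) x)
      ≤ ∑ k ∈ Finset.range (n + 1), p ((t ^ k / k.factorial : ℝ) • (G ^ k) x) :=
        seminorm_sum_le' p _ _
    _ ≤ ∑ k ∈ Finset.range (n + 1), exp (t * c) * (α k * q k x) := by
        refine Finset.sum_le_sum fun k _ => ?_
        rw [map_smul_eq_mul]
        rw [Real.norm_eq_abs,
          abs_of_nonneg (div_nonneg (pow_nonneg ht k) (Nat.cast_nonneg _))]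
        calc t ^ k / (k.factorial : ℝ) * p ((G ^ k) x)
            ≤ t ^ k / (k.factorial : ℝ) * (c ^ k * q k x) :=
              mul_le_mul_of_nonneg_left (hGk k x)
                (div_nonneg (pow_nonneg ht k) (Nat.cast_nonneg _))
          _ = exp (t * c) * (α k * q k x) := by
              have h1 : rexp (t * c) * rexp (-(t * c)) = 1 := by
                rw [← Real.exp_add]; simp
              simp only [hα, mul_pow]
              linear_combination (-(c ^ k * t ^ k / (k.factorial : ℝ) * q k x)) * h1
    _ = exp (t * c) * ∑ k ∈ Finset.range (n + 1), α k * q k x := by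
        rw [Finset.mul_sum]
    _ ≤ exp (t * c) * ∑' k, α k * q k x := by
        exact mul_le_mul_of_nonneg_left
          (Summable.sum_le_tsum _ (fun k _ => mul_nonneg (hαnn k) (apply_nonneg _ _)) (hsum_le x))
          (exp_pos _).le
    _ = exp (t * c) * qt x := by rw [hqteq x]
end
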